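/- For every regular expression α, the position automaton A_pos(α) accepts exactly L(α). -/

import Mathlib

open RegularExpression
open scoped Classical

variable {σ : Type*}

/-- Alphabetic size: number of letter occurrences. -/
def alph : RegularExpression σ → ℕ
  | zero => 0
  | epsilon => 0
  | char _ => 1
  | plus P Q => alph P + alph Q
  | comp P Q => alph P + alph Q
  | RegularExpression.star P => alph P

/-- Mark every letter occurrence with its position; `n` is the number of
positions used so far (positions are `n+1, n+2, …`). -/
def mark : RegularExpression σ → ℕ → RegularExpression (σ × ℕ)
  | zero, _ => zero
  | epsilon, _ => epsilon
  | char a, n => char (a, n + 1)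
  | plus P Q, n => plus (mark P n) (mark Q (n + alph P))
  | comp P Q, n => comp (mark P n) (mark Q (n + alph P))
  | RegularExpression.star P, n => RegularExpression.star (mark P n)

/-- The marked version `ᾱ` of `α`, with positions `1, …, |α|_Σ`. -/
def marked (α : RegularExpression σ) : RegularExpression (σ × ℕ) :=
  mark α 0

/-- `first(α)`: positions that can begin a word of `L(ᾱ)`. -/
def first (α : RegularExpression σ) : Set ℕ :=
  {j | ∃ a w, ((a, j) :: w) ∈ (marked α).matches'}

/-- `last(α)`: positions that can end a word of `L(ᾱ)`. -/
def last (α : RegularExpression σ) : Set ℕ :=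
  {j | ∃ a w, (w ++ [(a, j)]) ∈ (marked α).matches'}

/-- `follow(α,i)`: positions that can follow position `i` in a word of `L(ᾱ)`,
with `follow(α,0) = first(α)`. -/
def follow (α : RegularExpression σ) (i : ℕ) : Set ℕ :=
  if i = 0 then first α
  else {j | ∃ a b u v, (u ++ (a, i) :: (b, j) :: v) ∈ (marked α).matches'}

/-- The letter occurring at position `j` (1-indexed) of `α`, if any. -/
def letterAt : RegularExpression σ → ℕ → Option σ
  | zero, _ => none
  | epsilon, _ => none
  | char a, j => if j = 1 then some a else none
  | plus P Q, j => if j ≤ alph P then letterAt P j else letterAt Q (j - alph P)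
  | comp P Q, j => if j ≤ alph P then letterAt P j else letterAt Q (j - alph P)
  | RegularExpression.star P, j => letterAt P j

/-- `Pos₀(α) = {0, 1, …, |α|_Σ}` as a type. -/
def Pos0 (α : RegularExpression σ) : Type _ := {i : ℕ // i ≤ alph α}

/-- The final-state set: `last(α) ∪ {0}` if `ε ∈ L(α)`, else `last(α)`. -/

noncomputable def lastZero (α : RegularExpression σ) : Set ℕ :=
  if [] ∈ α.matches' then last α ∪ {0} else last α

/-- The Glushkov position automaton of `α`. -/
noncomputable def posNFA (α : RegularExpression σ) : NFA σ (Pos0 α) where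
  step := fun i a => {j | j.1 ∈ follow α i.1 ∧ letterAt α j.1 = some a}
  start := {i | i.1 = 0}
  accept := {i | i.1 ∈ lastZero α}

/-!
Marking turns every letter occurrence of `α` into a letter of its own, so the two operands of
every `+` and `·` in `ᾱ` use disjoint letters. Such an expression denotes a local language: a
nonempty word belongs to it as soon as its first letter begins some word of the language, its
last letter ends one, and each pair of adjacent letters is adjacent in one. For `+`, `·` and `∗`
this is proved by cutting a word at the links where it passes from one operand, or one
iteration, to the next. A run of `posNFA α` on `w` is exactly a marked word over `w` with these
three properties, the state `0` standing for the empty prefix; hence `posNFA α` accepts the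
unmarked words of `L(ᾱ)`, which are those of `L(α)`.
-/

namespace List

variable {Γ : Type*}

theorem pair_infix_append {a b : Γ} {x y : List Γ} (h : [a, b] <:+: x ++ y) :
    [a, b] <:+: x ∨ [a, b] <:+: y ∨ x.getLast? = some a ∧ y.head? = some b := by
  rcases infix_append_iff_ne_nil.1 h with h | h | ⟨l₁, l₂, h₁, h₂, hab, hx, hy⟩
  · exact Or.inl h
  · exact Or.inr (Or.inl h)
  · obtain ⟨rfl, rfl⟩ : l₁ = [a] ∧ l₂ = [b] := by
      rcases l₁ with _ | ⟨c, _ | ⟨d, l₁⟩⟩ <;> rcases l₂ with _ | ⟨e, l₂⟩ <;> simp_all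
    exact Or.inr (Or.inr ⟨singleton_suffix_iff_getLast?_eq_some.1 hx,
      singleton_prefix_iff_head?_eq_some.1 hy⟩)

end List

theorem NFA.mem_evalFrom_singleton_cons {Γ Q : Type*} (M : NFA Γ Q) {s t : Q} {a : Γ}
    {w : List Γ} : t ∈ M.evalFrom {s} (a :: w) ↔ ∃ s' ∈ M.step s a, t ∈ M.evalFrom {s'} w := by
  rw [NFA.evalFrom_cons, NFA.stepSet_singleton, NFA.mem_evalFrom_iff_exists]

open Computability

namespace Language

variable {Γ : Type*}

def symbols (L : Language Γ) : Set Γ := {a | ∃ w ∈ L, a ∈ w}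

def firsts (L : Language Γ) : Set Γ := {a | ∃ w ∈ L, w.head? = some a}

def lasts (L : Language Γ) : Set Γ := {a | ∃ w ∈ L, w.getLast? = some a}

def follows (L : Language Γ) (a b : Γ) : Prop := ∃ w ∈ L, [a, b] <:+: w

def IsLocal (L : Language Γ) : Prop :=
  ∀ w ≠ [], (∀ a ∈ w.head?, a ∈ L.firsts) → w.IsChain L.follows →
    (∀ a ∈ w.getLast?, a ∈ L.lasts) → w ∈ L

variable {L L₁ L₂ : Language Γ} {a b : Γ}

theorem firsts_subset_symbols : L.firsts ⊆ L.symbols :=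
  fun _ ⟨w, hw, ha⟩ => ⟨w, hw, List.mem_of_mem_head? ha⟩

theorem lasts_subset_symbols : L.lasts ⊆ L.symbols :=
  fun _ ⟨w, hw, ha⟩ => ⟨w, hw, List.mem_of_mem_getLast? ha⟩

theorem left_mem_symbols_of_follows (h : L.follows a b) : a ∈ L.symbols :=
  let ⟨w, hw, hab⟩ := h
  ⟨w, hw, hab.subset (by simp)⟩

theorem right_mem_symbols_of_follows (h : L.follows a b) : b ∈ L.symbols :=
  let ⟨w, hw, hab⟩ := h
  ⟨w, hw, hab.subset (by simp)⟩

theorem isChain_follows_of_mem {w : List Γ} (hw : w ∈ L) : w.IsChain L.follows :=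
  (List.isChain_isInfix w).imp fun _ _ h => ⟨w, hw, h⟩

theorem IsLocal.mem_iff (hL : L.IsLocal) {w : List Γ} (hw : w ≠ []) :
    w ∈ L ↔ (∀ a ∈ w.head?, a ∈ L.firsts) ∧ w.IsChain L.follows ∧
      ∀ a ∈ w.getLast?, a ∈ L.lasts :=
  ⟨fun h => ⟨fun _ ha => ⟨w, h, ha⟩, isChain_follows_of_mem h, fun _ ha => ⟨w, h, ha⟩⟩,
    fun ⟨h₁, h₂, h₃⟩ => hL w hw h₁ h₂ h₃⟩

theorem symbols_add : (L₁ + L₂).symbols = L₁.symbols ∪ L₂.symbols := by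
  ext a
  simp only [symbols, mem_add, Set.mem_union]
  grind

theorem firsts_add : (L₁ + L₂).firsts = L₁.firsts ∪ L₂.firsts := by
  ext a
  simp only [firsts, mem_add, Set.mem_union]
  grind

theorem lasts_add : (L₁ + L₂).lasts = L₁.lasts ∪ L₂.lasts := by
  ext a
  simp only [lasts, mem_add, Set.mem_union]
  grind

theorem follows_add : (L₁ + L₂).follows a b ↔ L₁.follows a b ∨ L₂.follows a b := by
  simp only [follows, mem_add]
  grind

theorem symbols_mul_subset : (L₁ * L₂).symbols ⊆ L₁.symbols ∪ L₂.symbols := by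
  rintro a ⟨_, ⟨x, hx, y, hy, rfl⟩, ha⟩
  rcases List.mem_append.1 ha with ha | ha
  exacts [Or.inl ⟨x, hx, ha⟩, Or.inr ⟨y, hy, ha⟩]

theorem firsts_mul_subset :
    (L₁ * L₂).firsts ⊆ L₁.firsts ∪ {a | [] ∈ L₁ ∧ a ∈ L₂.firsts} := by
  rintro a ⟨_, ⟨x, hx, y, hy, rfl⟩, ha⟩
  rcases x with _ | ⟨c, x⟩
  · exact Or.inr ⟨hx, y, hy, ha⟩
  · exact Or.inl ⟨_, hx, ha⟩

theorem lasts_mul_subset :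
    (L₁ * L₂).lasts ⊆ L₂.lasts ∪ {a | [] ∈ L₂ ∧ a ∈ L₁.lasts} := by
  rintro a ⟨_, ⟨x, hx, y, hy, rfl⟩, ha⟩
  rcases y.eq_nil_or_concat with rfl | ⟨y, c, rfl⟩
  · exact Or.inr ⟨hy, x, hx, by simpa using ha⟩
  · exact Or.inl ⟨_, hy, by simpa using ha⟩

theorem follows_mul_imp (h : (L₁ * L₂).follows a b) :
    L₁.follows a b ∨ a ∈ L₁.lasts ∧ b ∈ L₂.firsts ∨ L₂.follows a b := by
  obtain ⟨_, ⟨x, hx, y, hy, rfl⟩, hab⟩ := h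
  rcases List.pair_infix_append hab with hab | hab | ⟨ha, hb⟩
  exacts [Or.inl ⟨x, hx, hab⟩, Or.inr (Or.inr ⟨y, hy, hab⟩),
    Or.inr (Or.inl ⟨⟨x, hx, ha⟩, y, hy, hb⟩)]

theorem symbols_kstar_subset : L∗.symbols ⊆ L.symbols := by
  rintro a ⟨_, ⟨S, rfl, hS⟩, ha⟩
  obtain ⟨y, hy, ha⟩ := List.mem_flatten.1 ha
  exact ⟨y, hS y hy, ha⟩

theorem firsts_kstar_subset : L∗.firsts ⊆ L.firsts := by
  rintro a ⟨_, ⟨S, rfl, hS⟩, ha⟩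
  rw [List.head?_flatten] at ha
  obtain ⟨y, hy, ha⟩ := List.exists_of_findSome?_eq_some ha
  exact ⟨y, hS y hy, ha⟩

theorem lasts_kstar_subset : L∗.lasts ⊆ L.lasts := by
  rintro a ⟨_, ⟨S, rfl, hS⟩, ha⟩
  rw [List.getLast?_flatten] at ha
  obtain ⟨y, hy, ha⟩ := List.exists_of_findSome?_eq_some ha
  exact ⟨y, hS y (List.mem_reverse.1 hy), ha⟩

theorem follows_kstar_imp (h : L∗.follows a b) :
    L.follows a b ∨ a ∈ L.lasts ∧ b ∈ L.firsts := by
  obtain ⟨_, ⟨S, rfl, hS⟩, hab⟩ := h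
  induction S with
  | nil => simp at hab
  | cons y S ih =>
    have hy := hS y (by simp)
    rw [List.flatten_cons] at hab
    rcases List.pair_infix_append hab with hab | hab | ⟨ha, hb⟩
    · exact Or.inl ⟨y, hy, hab⟩
    · exact ih (fun z hz => hS z (by simp [hz])) hab
    · exact Or.inr ⟨⟨y, hy, ha⟩,
        firsts_kstar_subset ⟨_, ⟨S, rfl, fun z hz => hS z (by simp [hz])⟩, hb⟩⟩

theorem isLocal_zero : (0 : Language Γ).IsLocal := by
  rintro (_ | ⟨a, w⟩) hw hfirst
  · contradiction
  · exact absurd (hfirst a rfl) fun ⟨_, h, _⟩ => notMem_zero _ h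

theorem isLocal_one : (1 : Language Γ).IsLocal := by
  rintro (_ | ⟨a, w⟩) hw hfirst
  · contradiction
  · obtain ⟨_, rfl, h⟩ := hfirst a rfl
    simp at h

theorem isLocal_singleton (c : Γ) : ({[c]} : Language Γ).IsLocal := by
  rintro (_ | ⟨a, _ | ⟨b, w⟩⟩) hw hfirst hchain
  · contradiction
  · obtain ⟨_, rfl, h⟩ := hfirst a rfl
    cases Option.some.inj h
    exact fun _ => rfl
  · obtain ⟨_, rfl, h⟩ := (List.isChain_cons_cons.1 hchain).1
    simpa using h.length_le

theorem mem_symbols_of_isChain {R : Γ → Γ → Prop}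
    (hR : ∀ a b, a ∈ L.symbols → R a b → L.follows a b) {w : List Γ}
    (hfirst : ∀ a ∈ w.head?, a ∈ L.firsts) (hchain : w.IsChain R) : ∀ a ∈ w, a ∈ L.symbols :=
  hchain.induction _ _ (fun a b hab ha => right_mem_symbols_of_follows (hR a b ha hab))
    fun hw => firsts_subset_symbols (hfirst _ (List.head?_eq_some_head hw))

theorem IsLocal.mem_of_isChain {R : Γ → Γ → Prop} {E : Set Γ} (hL : L.IsLocal)
    (hR : ∀ a b, a ∈ L.symbols → R a b → L.follows a b) (hE : E ∩ L.symbols ⊆ L.lasts)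
    {w : List Γ} (hw : w ≠ []) (hfirst : ∀ a ∈ w.head?, a ∈ L.firsts) (hchain : w.IsChain R)
    (hlast : ∀ a ∈ w.getLast?, a ∈ E) : w ∈ L := by
  have hsymb := mem_symbols_of_isChain hR hfirst hchain
  refine hL w hw hfirst (hchain.imp_of_mem_imp fun a b ha _ => hR a b (hsymb a ha)) ?_
  exact fun a ha => hE ⟨hlast a ha, hsymb a (List.mem_of_mem_getLast? ha)⟩

theorem IsLocal.add (h₁ : L₁.IsLocal) (h₂ : L₂.IsLocal) (hd : Disjoint L₁.symbols L₂.symbols) :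
    (L₁ + L₂).IsLocal := by
  rintro (_ | ⟨a, w⟩) hw hfirst hchain hlast
  · contradiction
  rw [lasts_add] at hlast
  rcases firsts_add ▸ hfirst a rfl with ha | ha
  · refine Or.inl (h₁.mem_of_isChain (fun b c hb hbc => ?_) (fun b ⟨hb, hb₁⟩ => ?_) hw
      (by simpa using ha) hchain hlast)
    · exact (follows_add.1 hbc).resolve_right
        fun h => hd.notMem_of_mem_left hb (left_mem_symbols_of_follows h)
    · exact hb.resolve_right fun h => hd.notMem_of_mem_left hb₁ (lasts_subset_symbols h)
  · refine Or.inr (h₂.mem_of_isChain (fun b c hb hbc => ?_) (fun b ⟨hb, hb₂⟩ => ?_) hw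
      (by simpa using ha) hchain hlast)
    · exact (follows_add.1 hbc).resolve_left
        fun h => hd.notMem_of_mem_right hb (left_mem_symbols_of_follows h)
    · exact hb.resolve_left fun h => hd.notMem_of_mem_right hb₂ (lasts_subset_symbols h)

theorem IsLocal.mul (h₁ : L₁.IsLocal) (h₂ : L₂.IsLocal) (hd : Disjoint L₁.symbols L₂.symbols) :
    (L₁ * L₂).IsLocal := by
  have hR₂ : ∀ a b, a ∈ L₂.symbols → (L₁ * L₂).follows a b → L₂.follows a b := by
    intro a b ha hab
    rcases follows_mul_imp hab with h | ⟨h, -⟩ | h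
    · exact absurd (left_mem_symbols_of_follows h) (hd.notMem_of_mem_right ha)
    · exact absurd (lasts_subset_symbols h) (hd.notMem_of_mem_right ha)
    · exact h
  have hE₂ : (L₁ * L₂).lasts ∩ L₂.symbols ⊆ L₂.lasts := fun a ⟨ha, ha₂⟩ =>
    (lasts_mul_subset ha).resolve_right
      fun h => hd.notMem_of_mem_right ha₂ (lasts_subset_symbols h.2)
  -- `u ++ [a]` is the part of the `L₁`-factor read so far
  have key : ∀ t u a, (∀ b ∈ (u ++ [a]).head?, b ∈ L₁.firsts) →
      (u ++ [a]).IsChain L₁.follows → (a :: t).IsChain (L₁ * L₂).follows →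
      (∀ b ∈ (a :: t).getLast?, b ∈ (L₁ * L₂).lasts) → u ++ a :: t ∈ L₁ * L₂ := by
    intro t
    induction t with
    | nil =>
      intro u a hfirst hchain _ hlast
      have ha : a ∈ L₁.symbols :=
        mem_symbols_of_isChain (fun _ _ _ h => h) hfirst hchain a (by simp)
      rcases lasts_mul_subset (hlast a rfl) with h | ⟨hnil, h⟩
      · exact absurd (lasts_subset_symbols h) (hd.notMem_of_mem_left ha)
      · exact ⟨_, h₁ _ (by simp) hfirst hchain (by simpa), [], hnil, by simp⟩
    | cons b t ih =>
      intro u a hfirst hchain hchain' hlast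
      obtain ⟨hab, hchain'⟩ := List.isChain_cons_cons.1 hchain'
      rcases follows_mul_imp hab with hab | ⟨ha, hb⟩ | hab
      · simpa using ih (u ++ [a]) b (by simpa using hfirst)
          (hchain.append (List.isChain_singleton b) (by simpa)) hchain' (by simpa using hlast)
      · exact ⟨_, h₁ _ (by simp) hfirst hchain (by simpa), b :: t,
          h₂.mem_of_isChain hR₂ hE₂ (by simp) (by simpa) hchain' (by simpa using hlast), by simp⟩
      · have ha : a ∈ L₁.symbols :=
          mem_symbols_of_isChain (fun _ _ _ h => h) hfirst hchain a (by simp)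
        exact absurd (left_mem_symbols_of_follows hab) (hd.notMem_of_mem_left ha)
  rintro (_ | ⟨a, t⟩) hw hfirst hchain hlast
  · contradiction
  rcases firsts_mul_subset (hfirst a rfl) with ha | ⟨hnil, ha⟩
  · simpa using key t [] a (by simpa) (List.isChain_singleton a) hchain hlast
  · exact ⟨[], hnil, _, h₂.mem_of_isChain hR₂ hE₂ hw (by simpa) hchain hlast, rfl⟩

theorem IsLocal.kstar (hL : L.IsLocal) : L∗.IsLocal := by
  -- `u ++ [a]` is the part of the current factor read so far
  have key : ∀ t u a, (∀ b ∈ (u ++ [a]).head?, b ∈ L.firsts) → (u ++ [a]).IsChain L.follows →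
      (a :: t).IsChain L∗.follows → (∀ b ∈ (a :: t).getLast?, b ∈ L.lasts) → u ++ a :: t ∈ L∗ := by
    intro t
    induction t with
    | nil =>
      intro u a hfirst hchain _ hlast
      exact (le_kstar : L ≤ L∗) (hL _ (by simp) hfirst hchain (by simpa using hlast))
    | cons b t ih =>
      intro u a hfirst hchain hchain' hlast
      obtain ⟨hab, hchain'⟩ := List.isChain_cons_cons.1 hchain'
      rcases follows_kstar_imp hab with hab | ⟨ha, hb⟩
      · simpa using ih (u ++ [a]) b (by simpa using hfirst)
          (hchain.append (List.isChain_singleton b) (by simpa)) hchain' (by simpa using hlast)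
      · have hu : u ++ [a] ∈ L := hL _ (by simp) hfirst hchain (by simpa)
        have ht : b :: t ∈ L∗ :=
          ih [] b (by simpa) (List.isChain_singleton b) hchain' (by simpa using hlast)
        rw [← one_add_self_mul_kstar_eq_kstar]
        exact Or.inr ⟨_, hu, _, ht, by simp⟩
  rintro (_ | ⟨a, t⟩) hw hfirst hchain hlast
  · contradiction
  · exact key t [] a (by simpa using firsts_kstar_subset (hfirst a rfl))
      (List.isChain_singleton a) hchain fun b hb => lasts_kstar_subset (hlast b hb)

end Language

theorem mark_map_fst (α : RegularExpression σ) (n : ℕ) : (mark α n).map Prod.fst = α := by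
  induction α generalizing n <;> simp_all [mark, ← plus_def, ← comp_def]

theorem mem_matches'_iff_exists_marked {α : RegularExpression σ} {w : List σ} :
    w ∈ α.matches' ↔ ∃ v ∈ (marked α).matches', v.map Prod.fst = w := by
  conv_lhs => rw [← mark_map_fst α 0, matches'_map]
  rfl

theorem mem_Icc_of_letterAt_eq_some {α : RegularExpression σ} {j : ℕ} {a : σ}
    (h : letterAt α j = some a) : j ∈ Set.Icc 1 (alph α) := by
  induction α generalizing j with
  | zero | epsilon => simp [letterAt] at h
  | char b => simp_all [letterAt, alph]
  | plus P Q ihP ihQ | comp P Q ihP ihQ =>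
    simp only [letterAt] at h
    split_ifs at h with hj
    · obtain ⟨h₁, h₂⟩ := ihP h
      exact ⟨h₁, by simp only [alph]; omega⟩
    · obtain ⟨h₁, h₂⟩ := ihQ h
      exact ⟨by omega, by simp only [alph]; omega⟩
  | star P ih => exact ih h

def markedLetters (α : RegularExpression σ) (n : ℕ) : Set (σ × ℕ) :=
  {x | ∃ j, x.2 = n + j ∧ letterAt α j = some x.1}

theorem markedLetters_plus (P Q : RegularExpression σ) (n : ℕ) :
    markedLetters (plus P Q) n = markedLetters P n ∪ markedLetters Q (n + alph P) := by
  ext x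
  constructor
  · rintro ⟨j, hx, hj⟩
    simp only [letterAt] at hj
    split_ifs at hj with hjP
    · exact Or.inl ⟨j, hx, hj⟩
    · exact Or.inr ⟨j - alph P, by omega, hj⟩
  · rintro (⟨j, hx, hj⟩ | ⟨j, hx, hj⟩)
    · have hjP := (mem_Icc_of_letterAt_eq_some hj).2
      exact ⟨j, hx, by simp [letterAt, hjP, hj]⟩
    · have hj₁ := (mem_Icc_of_letterAt_eq_some hj).1
      refine ⟨alph P + j, by omega, ?_⟩
      simp only [letterAt, if_neg (show ¬alph P + j ≤ alph P by omega), Nat.add_sub_cancel_left, hj]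

theorem markedLetters_comp (P Q : RegularExpression σ) (n : ℕ) :
    markedLetters (comp P Q) n = markedLetters (plus P Q) n :=
  rfl

theorem disjoint_markedLetters (P Q : RegularExpression σ) (n : ℕ) :
    Disjoint (markedLetters P n) (markedLetters Q (n + alph P)) := by
  refine Set.disjoint_left.2 fun x ⟨j, hx, hj⟩ ⟨k, hx', hk⟩ => ?_
  have := mem_Icc_of_letterAt_eq_some hj
  have := mem_Icc_of_letterAt_eq_some hk
  simp only [Set.mem_Icc] at *
  omega

theorem symbols_mark_subset (α : RegularExpression σ) (n : ℕ) :
    (mark α n).matches'.symbols ⊆ markedLetters α n := by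
  induction α generalizing n with
  | zero => rintro x ⟨w, hw, -⟩; exact absurd hw (Language.notMem_zero w)
  | epsilon => rintro x ⟨w, hw, hx⟩; simp_all [mark, Language.mem_one]
  | char a =>
    rintro x ⟨w, rfl, hx⟩
    simp only [List.mem_singleton] at hx
    exact ⟨1, by simp [hx], by simp [letterAt, hx]⟩
  | plus P Q ihP ihQ =>
    rw [markedLetters_plus]
    exact Language.symbols_add.subset.trans (Set.union_subset_union (ihP n) (ihQ _))
  | comp P Q ihP ihQ =>
    rw [markedLetters_comp, markedLetters_plus]
    exact Language.symbols_mul_subset.trans (Set.union_subset_union (ihP n) (ihQ _))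
  | star P ih => exact Language.symbols_kstar_subset.trans (ih n)

theorem isLocal_mark (α : RegularExpression σ) (n : ℕ) : (mark α n).matches'.IsLocal := by
  induction α generalizing n with
  | zero => exact Language.isLocal_zero
  | epsilon => exact Language.isLocal_one
  | char a => exact Language.isLocal_singleton _
  | plus P Q ihP ihQ =>
    exact (ihP n).add (ihQ _) ((disjoint_markedLetters P Q n).mono
      (symbols_mark_subset P n) (symbols_mark_subset Q _))
  | comp P Q ihP ihQ =>
    exact (ihP n).mul (ihQ _) ((disjoint_markedLetters P Q n).mono
      (symbols_mark_subset P n) (symbols_mark_subset Q _))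
  | star P ih => exact (ih n).kstar

section Marked

variable {α : RegularExpression σ}

theorem letterAt_of_mem_symbols {x : σ × ℕ} (hx : x ∈ (marked α).matches'.symbols) :
    letterAt α x.2 = some x.1 := by
  obtain ⟨j, hj, h⟩ := symbols_mark_subset α 0 hx
  rwa [hj, Nat.zero_add]

theorem letter_eq_of_mem_symbols {a b : σ} {j : ℕ} (h : (a, j) ∈ (marked α).matches'.symbols)
    (hb : letterAt α j = some b) : a = b :=
  Option.some_inj.1 ((letterAt_of_mem_symbols h).symm.trans hb)

theorem mem_first_iff {x : σ × ℕ} (hx : letterAt α x.2 = some x.1) :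
    x.2 ∈ first α ↔ x ∈ (marked α).matches'.firsts := by
  constructor
  · rintro ⟨a, w, h⟩
    obtain rfl := letter_eq_of_mem_symbols ⟨_, h, List.mem_cons_self⟩ hx
    exact ⟨_, h, rfl⟩
  · rintro ⟨w, hw, hx⟩
    obtain ⟨w, rfl⟩ := List.head?_eq_some_iff.1 hx
    exact ⟨x.1, w, hw⟩

theorem mem_last_iff {x : σ × ℕ} (hx : letterAt α x.2 = some x.1) :
    x.2 ∈ last α ↔ x ∈ (marked α).matches'.lasts := by
  constructor
  · rintro ⟨a, w, h⟩
    obtain rfl := letter_eq_of_mem_symbols (a := a) ⟨_, h, by simp⟩ hx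
    exact ⟨_, h, by simp⟩
  · rintro ⟨w, hw, hx⟩
    obtain ⟨w, rfl⟩ := List.getLast?_eq_some_iff.1 hx
    exact ⟨x.1, w, hw⟩

theorem mem_follow_iff {x y : σ × ℕ} (hx : letterAt α x.2 = some x.1)
    (hy : letterAt α y.2 = some y.1) : y.2 ∈ follow α x.2 ↔ (marked α).matches'.follows x y := by
  rw [follow, if_neg (Nat.one_le_iff_ne_zero.1 (mem_Icc_of_letterAt_eq_some hx).1)]
  constructor
  · rintro ⟨a, b, u, v, h⟩
    obtain rfl := letter_eq_of_mem_symbols (a := a) ⟨_, h, by simp⟩ hx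
    obtain rfl := letter_eq_of_mem_symbols (a := b) ⟨_, h, by simp⟩ hy
    exact ⟨_, h, u, v, by simp⟩
  · rintro ⟨_, hw, u, v, rfl⟩
    exact ⟨x.1, y.1, u, v, by simpa using hw⟩

theorem zero_notMem_last : 0 ∉ last α := fun ⟨a, w, h⟩ => by
  simpa using mem_Icc_of_letterAt_eq_some (letterAt_of_mem_symbols (x := (a, 0)) ⟨_, h, by simp⟩)

theorem mem_lastZero_iff {j : ℕ} : j ∈ lastZero α ↔ j ∈ last α ∨ j = 0 ∧ [] ∈ α.matches' := by
  unfold lastZero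
  split_ifs <;> simp [*, or_comm]

theorem nil_mem_marked_iff : [] ∈ (marked α).matches' ↔ [] ∈ α.matches' := by
  rw [mem_matches'_iff_exists_marked (α := α)]
  refine ⟨fun h => ⟨[], h, rfl⟩, fun ⟨v, hv, hv'⟩ => ?_⟩
  rwa [List.map_eq_nil_iff.1 hv'] at hv

theorem isChain_follow_iff {v : List (σ × ℕ)} (hv : ∀ x ∈ v, letterAt α x.2 = some x.1) :
    (v.map Prod.snd).IsChain (fun i j => j ∈ follow α i) ↔
      v.IsChain (marked α).matches'.follows := by
  rw [List.isChain_map]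
  exact List.IsChain.iff_of_mem_imp fun x y hx hy => mem_follow_iff (hv x hx) (hv y hy)

theorem mem_marked_iff {v : List (σ × ℕ)} (hv : ∀ x ∈ v, letterAt α x.2 = some x.1) :
    v ∈ (marked α).matches' ↔ (0 :: v.map Prod.snd).IsChain (fun i j => j ∈ follow α i) ∧
      (0 :: v.map Prod.snd).getLast (List.cons_ne_nil _ _) ∈ lastZero α := by
  rcases v with _ | ⟨x, v⟩
  · simp [mem_lastZero_iff, zero_notMem_last, nil_mem_marked_iff]
  have hM : (marked α).matches'.IsLocal := isLocal_mark α 0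
  have hlast := hv _ (List.getLast_mem (List.cons_ne_nil x v))
  rw [hM.mem_iff (List.cons_ne_nil x v), List.isChain_cons (x := 0),
    isChain_follow_iff hv, List.getLast_cons (by simp), List.getLast_map, mem_lastZero_iff,
    mem_last_iff hlast, List.getLast?_eq_some_getLast (List.cons_ne_nil x v)]
  have hlast₀ : ((x :: v).getLast (List.cons_ne_nil x v)).2 ≠ 0 :=
    Nat.one_le_iff_ne_zero.1 (mem_Icc_of_letterAt_eq_some hlast).1
  simp only [List.map_cons, List.head?_cons, Option.mem_def, Option.some.injEq, forall_eq', follow,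
    ↓reduceIte, mem_first_iff (hv x List.mem_cons_self), hlast₀, false_and, or_false, and_assoc]

end Marked

theorem mem_evalFrom_posNFA_iff {α : RegularExpression σ} {s t : Pos0 α} {w : List σ} :
    t ∈ (posNFA α).evalFrom {s} w ↔ ∃ v : List (σ × ℕ), v.map Prod.fst = w ∧
      (∀ x ∈ v, letterAt α x.2 = some x.1) ∧
      (s.1 :: v.map Prod.snd).IsChain (fun i j => j ∈ follow α i) ∧
      (s.1 :: v.map Prod.snd).getLast (List.cons_ne_nil _ _) = t.1 := by
  induction w generalizing s with
  | nil =>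
    rw [NFA.evalFrom_nil, Set.mem_singleton_iff]
    constructor
    · rintro rfl
      exact ⟨[], rfl, by simp, List.isChain_singleton _, rfl⟩
    · rintro ⟨v, hv, -, -, hend⟩
      obtain rfl := List.map_eq_nil_iff.1 hv
      exact Subtype.ext hend.symm
  | cons a w ih =>
    simp only [NFA.mem_evalFrom_singleton_cons, ih]
    constructor
    · rintro ⟨s', ⟨hfollow, hletter⟩, v, rfl, hv, hchain, hend⟩
      exact ⟨(a, s'.1) :: v, rfl, List.forall_mem_cons.2 ⟨hletter, hv⟩,
        List.isChain_cons_cons.2 ⟨hfollow, hchain⟩, by simpa using hend⟩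
    · rintro ⟨_ | ⟨x, v⟩, hw, hv, hchain, hend⟩
      · simp at hw
      obtain ⟨rfl, rfl⟩ := List.cons_eq_cons.1 hw
      obtain ⟨hfollow, hchain⟩ := List.isChain_cons_cons.1 hchain
      have hx := hv x List.mem_cons_self
      exact ⟨⟨x.2, (mem_Icc_of_letterAt_eq_some hx).2⟩, ⟨hfollow, hx⟩, v, rfl,
        fun y hy => hv y (List.mem_cons_of_mem x hy), hchain, by simpa using hend⟩

/-- The position automaton accepts exactly `L(α)`. -/
theorem posNFA_accepts (α : RegularExpression σ) :
    (posNFA α).accepts = α.matches' := by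
  ext w
  rw [mem_matches'_iff_exists_marked, NFA.mem_accepts]
  simp only [NFA.mem_evalFrom_iff_exists (S := (posNFA α).start), mem_evalFrom_posNFA_iff]
  constructor
  · rintro ⟨t, ht, s, hs, v, rfl, hv, hchain, hend⟩
    rw [show s.1 = 0 from hs] at hchain hend
    exact ⟨v, (mem_marked_iff hv).2 ⟨hchain, hend ▸ ht⟩, rfl⟩
  · rintro ⟨v, hvM, rfl⟩
    have hv : ∀ x ∈ v, letterAt α x.2 = some x.1 := fun x hx => letterAt_of_mem_symbols ⟨v, hvM, hx⟩
    obtain ⟨hchain, hlast⟩ := (mem_marked_iff hv).1 hvM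
    have hle : ∀ j ∈ 0 :: v.map Prod.snd, j ≤ alph α := by
      simp only [List.mem_cons, List.mem_map]
      rintro j (rfl | ⟨x, hx, rfl⟩)
      exacts [Nat.zero_le _, (mem_Icc_of_letterAt_eq_some (hv x hx)).2]
    exact ⟨⟨_, hle _ (List.getLast_mem _)⟩, hlast, ⟨0, Nat.zero_le _⟩, rfl, v, rfl, hv, hchain, rfl⟩
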